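/- arXiv:0810.5109 — 5 statements merged into one kernel-verified Lean document; each statement's English description precedes it below -/
import Mathlib

section
/- For every n ≥ 1 and every unit vector x ∈ ℂⁿ, equality Σ_{1≤j<l≤n} (2·Re(conj(x_j)·x_l))² = 2 − 2/n holds if and only if there exist a complex number c with |c| = 1 and a proper state y ∈ ℂⁿ such that x = c·y; equivalently, if and only if there is θ ∈ ℝ with x_j² = e^{iθ}/n for every j. -/
/-! Expanding `(2 Re(x̄ⱼ xₗ))² = 2 Re(x̄ⱼ² xₗ²) + 2‖xⱼ‖²‖xₗ‖²` and symmetrising over `j ≠ l`, the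
sum equals `‖∑ xⱼ²‖² + (∑ ‖xⱼ‖²)² - 2 ∑ ‖xⱼ‖⁴`. For a unit vector, `‖∑ xⱼ²‖ ≤ 1` and, by the
variance identity `∑ ‖zⱼ - z̄‖² = ∑ ‖zⱼ‖² - ‖∑ zⱼ‖² / n`, `∑ ‖xⱼ‖⁴ ≥ 1/n`; so the sum is at most
`2 - 2/n`, with equality iff `‖∑ xⱼ²‖ = 1` and every `‖xⱼ‖² = 1/n`. The variance identity for
`zⱼ = xⱼ²` then shows that all `xⱼ²` equal their mean `e^{iθ}/n`, and `c = e^{iθ/2}` turns this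
into `x = c • y` with `y` a proper state. -/

open Finset Complex ComplexConjugate

variable {ι : Type*}

section Mean

variable {E : Type*} [NormedAddCommGroup E] [InnerProductSpace ℝ E] [Fintype ι]

theorem sum_norm_sub_inv_card_smul_sum_sq (z : ι → E) :
    ∑ j, ‖z j - (Fintype.card ι : ℝ)⁻¹ • ∑ i, z i‖ ^ 2
      = ∑ j, ‖z j‖ ^ 2 - (Fintype.card ι : ℝ)⁻¹ * ‖∑ j, z j‖ ^ 2 := by
  cases isEmpty_or_nonempty ι
  · simp
  set c : ℝ := (Fintype.card ι : ℝ)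
  set S := ∑ i, z i
  have hc : 0 < c := by positivity
  have hS : ∑ j, inner ℝ (z j) (c⁻¹ • S) = c⁻¹ * ‖S‖ ^ 2 := by
    rw [← sum_inner, real_inner_smul_right, real_inner_self_eq_norm_sq]
  simp only [norm_sub_sq_real, sum_add_distrib, sum_sub_distrib, ← mul_sum, hS, sum_const,
    card_univ, nsmul_eq_mul, norm_smul, Real.norm_eq_abs, abs_inv, abs_of_pos hc]
  field_simp
  ring

theorem inv_card_mul_norm_sum_sq_le (z : ι → E) :
    (Fintype.card ι : ℝ)⁻¹ * ‖∑ j, z j‖ ^ 2 ≤ ∑ j, ‖z j‖ ^ 2 := by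
  have hvar : 0 ≤ ∑ j, ‖z j - (Fintype.card ι : ℝ)⁻¹ • ∑ i, z i‖ ^ 2 := by positivity
  linarith [sum_norm_sub_inv_card_smul_sum_sq z]

theorem sum_norm_sq_eq_inv_card_mul_iff (z : ι → E) :
    ∑ j, ‖z j‖ ^ 2 = (Fintype.card ι : ℝ)⁻¹ * ‖∑ j, z j‖ ^ 2
      ↔ ∀ j, z j = (Fintype.card ι : ℝ)⁻¹ • ∑ i, z i := by
  rw [← sub_eq_zero, ← sum_norm_sub_inv_card_smul_sum_sq,
    sum_eq_zero_iff_of_nonneg fun _ _ ↦ by positivity]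
  simp [sub_eq_zero]

end Mean

theorem Finset.sum_sum_eq_two_nsmul_sum_lt_add_sum_diag [Fintype ι] [LinearOrder ι]
    {M : Type*} [AddCommMonoid M] (f : ι → ι → M) (hf : ∀ j l, f j l = f l j) :
    ∑ j, ∑ l, f j l = 2 • ∑ j, ∑ l, (if j < l then f j l else 0) + ∑ j, f j j := by
  calc ∑ j, ∑ l, f j l
      = ∑ j, ∑ l, ((if j < l then f j l else 0) + (if l < j then f l j else 0)
          + if j = l then f j j else 0) := by
        refine sum_congr rfl fun j _ ↦ sum_congr rfl fun l _ ↦ ?_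
        rcases lt_trichotomy j l with h | rfl | h
        · simp [h, h.not_gt, h.ne]
        · simp
        · simp [h, h.not_gt, h.ne', hf j l]
    _ = _ := by
        simp only [sum_add_distrib, sum_ite_eq, mem_univ, if_true]
        rw [sum_comm (f := fun j l ↦ if l < j then f l j else 0), two_nsmul]

theorem Complex.two_re_conj_mul_sq (a b : ℂ) :
    (2 * (conj a * b).re) ^ 2 = 2 * (conj (a ^ 2) * b ^ 2).re + 2 * (‖a‖ ^ 2 * ‖b‖ ^ 2) := by
  rw [Complex.sq_norm, Complex.sq_norm]
  simp only [normSq_apply, mul_re, mul_im, conj_re, conj_im, pow_two]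
  ring

theorem Complex.sum_sum_re_conj_mul [Fintype ι] (z : ι → ℂ) :
    ∑ j, ∑ l, (conj (z j) * z l).re = ‖∑ j, z j‖ ^ 2 := by
  calc ∑ j, ∑ l, (conj (z j) * z l).re = (conj (∑ j, z j) * ∑ j, z j).re := by
        simp only [map_sum, sum_mul_sum, re_sum]
    _ = ‖∑ j, z j‖ ^ 2 := by rw [conj_mul']; norm_cast

/-- `∑_{j<l} ⟨x, B_{jl} x⟩²` in the paper's notation. -/
noncomputable def sumSqExpectB [Fintype ι] [LinearOrder ι] (x : ι → ℂ) : ℝ :=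
  ∑ j, ∑ l, if j < l then (2 * (conj (x j) * x l).re) ^ 2 else 0

theorem sumSqExpectB_eq [Fintype ι] [LinearOrder ι] (x : ι → ℂ) :
    sumSqExpectB x = ‖∑ j, x j ^ 2‖ ^ 2 + (∑ j, ‖x j‖ ^ 2) ^ 2 - 2 * ∑ j, ‖x j‖ ^ 4 := by
  set f : ι → ι → ℝ := fun j l ↦ (2 * (conj (x j) * x l).re) ^ 2
  have hsplit := sum_sum_eq_two_nsmul_sum_lt_add_sum_diag f fun j l ↦ by
    simp only [f]; rw [← conj_re, map_mul, conj_conj, mul_comm (x j)]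
  have htotal : ∑ j, ∑ l, f j l = 2 * ‖∑ j, x j ^ 2‖ ^ 2 + 2 * (∑ j, ‖x j‖ ^ 2) ^ 2 := by
    simp only [f, two_re_conj_mul_sq, sum_add_distrib, ← mul_sum, sum_sum_re_conj_mul]
    rw [sq (∑ j, ‖x j‖ ^ 2), sum_mul]
  have hdiag : ∑ j, f j j = 4 * ∑ j, ‖x j‖ ^ 4 := by
    simp only [f, conj_mul', mul_sum]
    refine sum_congr rfl fun j _ ↦ ?_
    norm_cast; ring
  rw [htotal, hdiag, nsmul_eq_mul, Nat.cast_ofNat] at hsplit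
  unfold sumSqExpectB
  linarith

theorem sumSqExpectB_eq_two_sub_iff [Fintype ι] [LinearOrder ι] {x : ι → ℂ}
    (hx : ∑ j, ‖x j‖ ^ 2 = 1) :
    sumSqExpectB x = 2 - 2 / Fintype.card ι ↔
      ‖∑ j, x j ^ 2‖ = 1 ∧ ∀ j, ‖x j‖ ^ 2 = (Fintype.card ι : ℝ)⁻¹ := by
  have hA : ‖∑ j, x j ^ 2‖ ≤ 1 := (norm_sum_le _ _).trans (by simp [norm_pow, hx])
  have hmean := sum_norm_sq_eq_inv_card_mul_iff fun j ↦ ‖x j‖ ^ 2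
  have hle := inv_card_mul_norm_sum_sq_le fun j ↦ ‖x j‖ ^ 2
  simp only [Real.norm_eq_abs, sq_abs, hx, abs_one, one_pow, mul_one, smul_eq_mul] at hmean hle
  have h4 : ∑ j, ‖x j‖ ^ 4 = ∑ j, (‖x j‖ ^ 2) ^ 2 := by simp only [← pow_mul]
  rw [sumSqExpectB_eq, hx, h4, ← hmean, div_eq_mul_inv]
  constructor
  · intro h
    have hA1 : ‖∑ j, x j ^ 2‖ = 1 := by nlinarith [norm_nonneg (∑ j, x j ^ 2)]
    exact ⟨hA1, by rw [hA1] at h; linarith⟩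
  · rintro ⟨hA1, hQ⟩
    rw [hA1, hQ]
    ring

theorem exists_eq_exp_div_card_iff [Fintype ι] [Nonempty ι] {z : ι → ℂ} :
    (∃ θ : ℝ, ∀ j, z j = exp (θ * I) / Fintype.card ι) ↔
      ‖∑ j, z j‖ = 1 ∧ ∀ j, ‖z j‖ = (Fintype.card ι : ℝ)⁻¹ := by
  have hc : (Fintype.card ι : ℂ) ≠ 0 := by simp [Fintype.card_ne_zero]
  constructor
  · rintro ⟨θ, hθ⟩
    simp [hθ, mul_div_cancel₀ _ hc, norm_exp_ofReal_mul_I]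
  · rintro ⟨hsum, hnorm⟩
    have hmean := (sum_norm_sq_eq_inv_card_mul_iff z).1 (by simp [hnorm, hsum, sq])
    have hexp : exp (arg (∑ j, z j) * I) = ∑ j, z j := by
      simpa [hsum] using norm_mul_exp_arg_mul_I (∑ j, z j)
    refine ⟨arg (∑ j, z j), fun j ↦ ?_⟩
    rw [hmean j, hexp, real_smul]
    push_cast
    ring

theorem sumSqExpectB_eq_two_sub_iff_exists [Fintype ι] [LinearOrder ι] {x : ι → ℂ}
    (hx : ∑ j, ‖x j‖ ^ 2 = 1) :
    sumSqExpectB x = 2 - 2 / Fintype.card ι ↔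
      ∃ θ : ℝ, ∀ j, x j ^ 2 = exp (θ * I) / Fintype.card ι := by
  have : Nonempty ι := by
    by_contra h
    rw [not_nonempty_iff] at h
    simp at hx
  simp only [sumSqExpectB_eq_two_sub_iff hx, exists_eq_exp_div_card_iff, norm_pow]

theorem exists_sq_eq_exp_div_iff_exists_smul {x : ι → ℂ} {r : ℝ} {N : ℂ}
    (hr : (r : ℂ) ^ 2 = N⁻¹) :
    (∃ θ : ℝ, ∀ j, x j ^ 2 = exp (θ * I) / N) ↔
      ∃ (c : ℂ) (y : ι → ℂ), ‖c‖ = 1 ∧ (∀ j, y j = r ∨ y j = -r) ∧ x = c • y := by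
  constructor
  · rintro ⟨θ, hθ⟩
    set c := exp ((θ / 2 : ℝ) * I)
    have hc2 : c ^ 2 = exp (θ * I) := by
      rw [← exp_nat_mul]
      push_cast
      ring_nf
    have hc0 : c ≠ 0 := exp_ne_zero _
    refine ⟨c, fun j ↦ x j / c, norm_exp_ofReal_mul_I _, fun j ↦ ?_, ?_⟩
    · rw [← sq_eq_sq_iff_eq_or_eq_neg, div_pow, hθ, hc2, hr]
      field_simp [exp_ne_zero]
    · ext j
      simp [mul_div_cancel₀ _ hc0]
  · rintro ⟨c, y, hc, hy, rfl⟩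
    have hexp : exp (arg c * I) = c := by simpa [hc] using norm_mul_exp_arg_mul_I c
    refine ⟨2 * arg c, fun j ↦ ?_⟩
    have hy2 : y j ^ 2 = N⁻¹ := by rcases hy j with h | h <;> simp [h, hr]
    rw [Pi.smul_apply, smul_eq_mul, mul_pow, hy2]
    conv_lhs => rw [← hexp, ← exp_nat_mul]
    push_cast
    ring_nf

theorem stmt_3_general (n : ℕ) (x : Fin n → ℂ)
    (hx : ∑ j : Fin n, ‖x j‖ ^ 2 = 1) :
    ((∑ j : Fin n, ∑ l : Fin n,
        (if j < l then (2 * ((starRingEnd ℂ) (x j) * x l).re) ^ 2 else 0))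
        = 2 - 2 / (n : ℝ)
      ↔ ∃ (c : ℂ) (y : Fin n → ℂ), ‖c‖ = 1 ∧
          (∀ j, y j = ((Real.sqrt n)⁻¹ : ℝ) ∨ y j = -((Real.sqrt n)⁻¹ : ℝ)) ∧
          x = c • y)
    ∧
    ((∑ j : Fin n, ∑ l : Fin n,
        (if j < l then (2 * ((starRingEnd ℂ) (x j) * x l).re) ^ 2 else 0))
        = 2 - 2 / (n : ℝ)
      ↔ ∃ θ : ℝ, ∀ j, (x j) ^ 2 = Complex.exp (θ * Complex.I) / n) := by
  have hS : sumSqExpectB x = 2 - 2 / (n : ℝ) ↔ ∃ θ : ℝ, ∀ j, x j ^ 2 = exp (θ * I) / n := by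
    simpa only [Fintype.card_fin] using sumSqExpectB_eq_two_sub_iff_exists hx
  have hr : (((√n)⁻¹ : ℝ) : ℂ) ^ 2 = (n : ℂ)⁻¹ := by
    rw [← ofReal_pow, inv_pow, Real.sq_sqrt n.cast_nonneg]
    push_cast
    rfl
  exact ⟨hS.trans (exists_sq_eq_exp_div_iff_exists_smul hr), hS⟩

/-- For a unit vector `x ∈ ℂⁿ`, equality `∑_{j<l} (2·Re(conj(x_j)·x_l))² = 2 − 2/n` holds
iff `x = c • y` for a unimodular `c` and a proper state `y` (all coordinates `±1/√n`);
equivalently, iff there is `θ ∈ ℝ` with `x_j² = e^{iθ}/n` for every `j`. -/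
theorem stmt_3 (n : ℕ) (hn : 1 ≤ n) (x : Fin n → ℂ)
    (hx : ∑ j : Fin n, ‖x j‖ ^ 2 = 1) :
    ((∑ j : Fin n, ∑ l : Fin n,
        (if j < l then (2 * ((starRingEnd ℂ) (x j) * x l).re) ^ 2 else 0))
        = 2 - 2 / (n : ℝ)
      ↔ ∃ (c : ℂ) (y : Fin n → ℂ), ‖c‖ = 1 ∧
          (∀ j, y j = ((Real.sqrt n)⁻¹ : ℝ) ∨ y j = -((Real.sqrt n)⁻¹ : ℝ)) ∧
          x = c • y)
    ∧
    ((∑ j : Fin n, ∑ l : Fin n,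
        (if j < l then (2 * ((starRingEnd ℂ) (x j) * x l).re) ^ 2 else 0))
        = 2 - 2 / (n : ℝ)
      ↔ ∃ θ : ℝ, ∀ j, (x j) ^ 2 = Complex.exp (θ * Complex.I) / n) :=
  stmt_3_general n x hx
end

section
/- For every constant ε > 0 there exists N such that for all n ≥ N the following holds: if x ∈ ℂⁿ is a unit vector with Σ_{1≤j<l≤n} (2·Re(conj(x_j)·x_l))² ≥ 2 − 2/n − n^{−(2+ε)}, then there exists a proper state y ∈ ℂⁿ with √(1 − |⟨y, x⟩|²) ≤ 5·n^{−ε/4}. (The quantity √(1 − |⟨y,x⟩|²) is the trace distance between the pure states |x⟩⟨x| and |y⟩⟨y|.) -/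
/-!
Put `μ = ∑ x_j²`. Since `(2 Re z)² = 2 Re z² + 2|z|²`, the pair sum equals
`|μ|² + ‖x‖⁴ − 2 ∑ |x_j|⁴`. For a unit vector with `δ = n^{−(2+ε)}`, the hypothesis together with
`∑ |x_j|⁴ ≥ 1/n` (Cauchy–Schwarz) and `|μ| ≤ 1` forces `|μ|² ≥ 1 − δ` and `∑ |x_j|⁴ ≤ 1/n + δ/2`.

Multiply `x` by a global phase so that `μ` becomes `|μ|`, and let `u = Re x`. Then
`∑ u_j² = (1 + |μ|)/2`, and the proper state `y_j = sign(u_j)/√n` has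
`Re ⟨y, x⟩ = ∑ |u_j|/√n ≥ (3 ∑ u_j² − n ∑ u_j⁴)/2`, termwise because `t (t − s)² (t + 2s) ≥ 0`
for `t = |u_j|`, `s = 1/√n`. Combining, `1 − |⟨y, x⟩|² ≤ 2 (1 − |⟨y, x⟩|) ≤ (n + 3) δ / 2`,
which is at most `25 n^{−ε/2}`.
-/

open Finset ComplexConjugate

theorem sum_sum_eq_two_nsmul_sum_sum_ite_lt_add_sum {ι M : Type*} [Fintype ι] [LinearOrder ι]
    [AddCommMonoid M] (f : ι → ι → M) (hf : ∀ j l, f j l = f l j) :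
    ∑ j, ∑ l, f j l = 2 • ∑ j, ∑ l, (if j < l then f j l else 0) + ∑ j, f j j := by
  have hsplit : ∀ j l, f j l
      = ((if j < l then f j l else 0) + if l < j then f l j else 0) + if j = l then f j l else 0 := by
    intro j l
    rcases lt_trichotomy j l with h | rfl | h
    · simp [h, h.not_gt, h.ne]
    · simp
    · simp [h, h.not_gt, h.ne', hf j l]
  simp_rw [sum_congr rfl fun j _ => sum_congr rfl fun l _ => hsplit j l, sum_add_distrib,
    sum_ite_eq, mem_univ, if_true, two_nsmul]
  rw [sum_comm (f := fun j l => if l < j then f l j else 0)]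

namespace Complex

theorem sq_two_mul_re_conj_mul (z w : ℂ) :
    (2 * (conj z * w).re) ^ 2 = 2 * (conj z ^ 2 * w ^ 2).re + 2 * (‖z‖ ^ 2 * ‖w‖ ^ 2) := by
  rw [Complex.sq_norm, Complex.sq_norm]
  simp only [normSq_apply, sq, mul_re, mul_im, conj_re, conj_im]
  ring

theorem sq_two_mul_re_conj_mul_self (z : ℂ) : (2 * (conj z * z).re) ^ 2 = 4 * ‖z‖ ^ 4 := by
  rw [conj_mul', ← ofReal_pow, ofReal_re]
  ring

theorem two_mul_re_sq (z : ℂ) : 2 * z.re ^ 2 = ‖z‖ ^ 2 + (z ^ 2).re := by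
  rw [Complex.sq_norm]
  simp only [normSq_apply, sq, mul_re]
  ring

theorem exists_norm_eq_one_sq_mul_eq_norm (μ : ℂ) : ∃ φ : ℂ, ‖φ‖ = 1 ∧ φ ^ 2 * μ = ‖μ‖ := by
  refine ⟨exp (↑(-(arg μ / 2)) * I), norm_exp_ofReal_mul_I _, ?_⟩
  have h : exp (↑(-(arg μ / 2)) * I) ^ 2 * exp (arg μ * I) = 1 := by
    rw [← exp_nat_mul, ← exp_add]
    push_cast
    ring_nf
    exact exp_zero
  calc _ = exp (↑(-(arg μ / 2)) * I) ^ 2 * (‖μ‖ * exp (arg μ * I)) := by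
        rw [norm_mul_exp_arg_mul_I]
    _ = (‖μ‖ : ℂ) := by linear_combination (‖μ‖ : ℂ) * h

end Complex

theorem three_mul_sq_sub_pow_four_div_le (u : ℝ) {s : ℝ} (hs : 0 < s) :
    3 * u ^ 2 - u ^ 4 / s ^ 2 ≤ 2 * s * |u| := by
  rw [show u ^ 4 = (u ^ 2) ^ 2 by ring, ← sq_abs u]
  have key : 0 ≤ |u| * (|u| - s) ^ 2 * (|u| + 2 * s) / s ^ 2 := by positivity
  have e : 2 * s * |u| - (3 * |u| ^ 2 - (|u| ^ 2) ^ 2 / s ^ 2)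
      = |u| * (|u| - s) ^ 2 * (|u| + 2 * s) / s ^ 2 := by
    field_simp
    ring
  linarith

section

variable {ι : Type*} [Fintype ι]

def IsProperState (y : ι → ℂ) : Prop :=
  ∀ j, y j = ((√(Fintype.card ι))⁻¹ : ℝ) ∨ y j = -((√(Fintype.card ι))⁻¹ : ℝ)

theorem sum_sum_sq_two_mul_re_conj_mul (x : ι → ℂ) :
    ∑ j, ∑ l, (2 * (conj (x j) * x l).re) ^ 2
      = 2 * ‖∑ j, x j ^ 2‖ ^ 2 + 2 * (∑ j, ‖x j‖ ^ 2) ^ 2 := by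
  simp_rw [Complex.sq_two_mul_re_conj_mul, sum_add_distrib, ← mul_sum, ← Complex.re_sum,
    ← sum_mul_sum, ← map_pow, ← map_sum, Complex.conj_mul', ← Complex.ofReal_pow,
    Complex.ofReal_re, ← sum_mul, ← sq]

theorem sum_sum_ite_lt_sq_two_mul_re_conj_mul [LinearOrder ι] (x : ι → ℂ) :
    ∑ j, ∑ l, (if j < l then (2 * (conj (x j) * x l).re) ^ 2 else 0)
      = ‖∑ j, x j ^ 2‖ ^ 2 + (∑ j, ‖x j‖ ^ 2) ^ 2 - 2 * ∑ j, ‖x j‖ ^ 4 := by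
  have h := sum_sum_eq_two_nsmul_sum_sum_ite_lt_add_sum
    (fun j l => (2 * (conj (x j) * x l).re) ^ 2)
    fun j l => by rw [← Complex.conj_re, map_mul, Complex.conj_conj, mul_comm (x j)]
  simp only [sum_sum_sq_two_mul_re_conj_mul, Complex.sq_two_mul_re_conj_mul_self, ← mul_sum,
    two_nsmul] at h
  linarith

theorem exists_isProperState_le_re_sum_conj_mul (w : ι → ℂ) :
    ∃ y, IsProperState y ∧
      3 * (∑ j, ‖w j‖ ^ 2 + (∑ j, w j ^ 2).re) - 2 * Fintype.card ι * ∑ j, ‖w j‖ ^ 4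
        ≤ 4 * (∑ j, conj (y j) * w j).re := by
  set s := (√(Fintype.card ι))⁻¹ with hs_def
  refine ⟨fun j => ((if 0 ≤ (w j).re then s else -s : ℝ) : ℂ),
    fun j => by by_cases h : 0 ≤ (w j).re <;> simp [h, s], ?_⟩
  simp only [Complex.re_sum, ← sum_add_distrib, mul_sum, ← sum_sub_distrib]
  refine sum_le_sum fun j _ => ?_
  have hs : 0 < s := inv_pos.2 (Real.sqrt_pos.2 (Nat.cast_pos.2 (Fintype.card_pos_iff.2 ⟨j⟩)))
  have hcard : (Fintype.card ι : ℝ) = 1 / s ^ 2 := by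
    rw [hs_def, inv_pow, Real.sq_sqrt (Nat.cast_nonneg _), one_div, inv_inv]
  have hre : (conj ((if 0 ≤ (w j).re then s else -s : ℝ) : ℂ) * w j).re = s * |(w j).re| := by
    rw [Complex.conj_ofReal, Complex.re_ofReal_mul]
    split_ifs with h
    · rw [abs_of_nonneg h]
    · rw [abs_of_neg (not_le.1 h)]; ring
  have h4 : (w j).re ^ 4 / s ^ 2 ≤ Fintype.card ι * ‖w j‖ ^ 4 := by
    rw [hcard, one_div_mul_eq_div]
    refine div_le_div_of_nonneg_right ?_ (sq_nonneg s)
    simpa only [Even.pow_abs (by decide : Even 4)] using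
      pow_le_pow_left₀ (abs_nonneg _) (Complex.abs_re_le_norm (w j)) 4
  calc 3 * (‖w j‖ ^ 2 + (w j ^ 2).re) - 2 * Fintype.card ι * ‖w j‖ ^ 4
      ≤ 2 * (3 * (w j).re ^ 2 - (w j).re ^ 4 / s ^ 2) := by
        linarith [Complex.two_mul_re_sq (w j)]
    _ ≤ 4 * (s * |(w j).re|) := by linarith [three_mul_sq_sub_pow_four_div_le (w j).re hs]
    _ = _ := by rw [hre]

theorem exists_isProperState_le_norm_sum_conj_mul (x : ι → ℂ) :
    ∃ y, IsProperState y ∧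
      3 * (∑ j, ‖x j‖ ^ 2 + ‖∑ j, x j ^ 2‖) - 2 * Fintype.card ι * ∑ j, ‖x j‖ ^ 4
        ≤ 4 * ‖∑ j, conj (y j) * x j‖ := by
  obtain ⟨φ, hφ, hφμ⟩ := Complex.exists_norm_eq_one_sq_mul_eq_norm (∑ j, x j ^ 2)
  obtain ⟨y, hy, h⟩ := exists_isProperState_le_re_sum_conj_mul (φ * x ·)
  refine ⟨y, hy, ?_⟩
  have hsq : ∑ j, (φ * x j) ^ 2 = ‖∑ j, x j ^ 2‖ := by simp_rw [mul_pow, ← mul_sum, hφμ]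
  have hinner : ∑ j, conj (y j) * (φ * x j) = φ * ∑ j, conj (y j) * x j := by
    rw [mul_sum]
    exact sum_congr rfl fun j _ => mul_left_comm _ _ _
  simp only [norm_mul, hφ, one_mul, hsq, Complex.ofReal_re, hinner] at h
  calc _ ≤ 4 * (φ * ∑ j, conj (y j) * x j).re := h
    _ ≤ 4 * ‖φ * ∑ j, conj (y j) * x j‖ := by gcongr; exact Complex.re_le_norm _
    _ = _ := by rw [norm_mul, hφ, one_mul]

theorem exists_isProperState_one_sub_norm_sq_le [LinearOrder ι] (x : ι → ℂ)
    (hx : ∑ j, ‖x j‖ ^ 2 = 1) {δ : ℝ}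
    (hS : 2 - 2 / Fintype.card ι - δ
      ≤ ∑ j, ∑ l, if j < l then (2 * (conj (x j) * x l).re) ^ 2 else 0) :
    ∃ y, IsProperState y ∧ 1 - ‖∑ j, conj (y j) * x j‖ ^ 2 ≤ (Fintype.card ι + 3) / 2 * δ := by
  obtain ⟨y, hy, hc⟩ := exists_isProperState_le_norm_sum_conj_mul x
  refine ⟨y, hy, ?_⟩
  rw [sum_sum_ite_lt_sq_two_mul_re_conj_mul, hx, one_pow] at hS
  rw [hx] at hc
  have hm : ‖∑ j, x j ^ 2‖ ≤ 1 := hx ▸ (norm_sum_le _ _).trans_eq (by simp only [norm_pow])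
  have hnQ : 1 ≤ Fintype.card ι * ∑ j, ‖x j‖ ^ 4 := by
    have h := sq_sum_le_card_mul_sum_sq (s := univ) (f := fun j => ‖x j‖ ^ 2)
    simp only [hx, one_pow, card_univ, ← pow_mul] at h
    exact h
  set n : ℝ := (Fintype.card ι : ℝ)
  set m := ‖∑ j, x j ^ 2‖
  set Q := ∑ j, ‖x j‖ ^ 4
  set c := ‖∑ j, conj (y j) * x j‖
  have hn : 0 < n := by
    by_contra! h
    nlinarith [sum_nonneg fun j (_ : j ∈ univ) => pow_nonneg (norm_nonneg (x j)) 4]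
  have hm2 : 1 - m ^ 2 ≤ δ := by
    have : 2 / n ≤ 2 * Q := by
      rw [div_le_iff₀ hn]
      linarith
    linarith
  have hnQ' : 2 * n * Q ≤ n * (m ^ 2 - 1 + δ) + 2 :=
    calc 2 * n * Q = n * (2 * Q) := by ring
      _ ≤ n * (m ^ 2 - 1 + δ + 2 / n) := by gcongr; linarith
      _ = n * (m ^ 2 - 1 + δ) + 2 := by field_simp
  have hmm : m ^ 2 ≤ m := by nlinarith [norm_nonneg (∑ j, x j ^ 2)]
  have hnm : 0 ≤ n * (1 - m ^ 2) := mul_nonneg hn.le (by linarith)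
  nlinarith [sq_nonneg (c - 1)]

end

theorem add_three_div_two_mul_rpow_le {n ε : ℝ} (hn : 1 ≤ n) (hε : 0 < ε) :
    (n + 3) / 2 * n ^ (-(2 + ε)) ≤ (5 * n ^ (-(ε / 4))) ^ 2 := by
  have hn0 : 0 < n := by linarith
  calc (n + 3) / 2 * n ^ (-(2 + ε)) ≤ 2 * (n * n ^ (-(2 + ε))) := by
        rw [← mul_assoc]
        gcongr
        linarith
    _ = 2 * n ^ (-(1 + ε)) := by
        rw [show -(1 + ε) = 1 + -(2 + ε) by ring, Real.rpow_add hn0, Real.rpow_one]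
    _ ≤ 25 * n ^ (-(ε / 2)) := by
        gcongr
        · norm_num
        · linarith
    _ = (5 * n ^ (-(ε / 4))) ^ 2 := by
        rw [mul_pow, ← Real.rpow_mul_natCast hn0.le]
        ring_nf

/-- For every `ε > 0` there is `N` such that for all `n ≥ N`: every unit vector `x ∈ ℂⁿ`
with `∑_{j<l} (2·Re(conj(x_j)·x_l))² ≥ 2 − 2/n − n^{−(2+ε)}` is within trace distance
`5·n^{−ε/4}` of a proper state `y`, i.e. `√(1 − |⟨y,x⟩|²) ≤ 5·n^{−ε/4}`. -/
theorem stmt_4 (ε : ℝ) (hε : 0 < ε) :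
    ∃ N : ℕ, ∀ n : ℕ, N ≤ n → ∀ x : Fin n → ℂ,
      (∑ j : Fin n, ‖x j‖ ^ 2 = 1) →
      (2 - 2 / n - (n : ℝ) ^ (-(2 + ε)) ≤
        ∑ j : Fin n, ∑ l : Fin n,
          (if j < l then (2 * ((starRingEnd ℂ) (x j) * x l).re) ^ 2 else 0)) →
      ∃ y : Fin n → ℂ,
        (∀ j, y j = ((Real.sqrt n)⁻¹ : ℝ) ∨ y j = -((Real.sqrt n)⁻¹ : ℝ)) ∧
        Real.sqrt (1 - ‖∑ j : Fin n, (starRingEnd ℂ) (y j) * x j‖ ^ 2)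
          ≤ 5 * (n : ℝ) ^ (-(ε / 4)) := by
  refine ⟨1, fun n hn x hx hS => ?_⟩
  obtain ⟨y, hy, hc⟩ := exists_isProperState_one_sub_norm_sq_le x hx
    (δ := (n : ℝ) ^ (-(2 + ε))) (by rwa [Fintype.card_fin])
  refine ⟨y, by simpa only [IsProperState, Fintype.card_fin] using hy, ?_⟩
  rw [Fintype.card_fin] at hc
  rw [Real.sqrt_le_left (by positivity)]
  exact hc.trans (add_three_div_two_mul_rpow_le (by exact_mod_cast hn) hε)
end

section
/- Let B_1, …, B_s be Hermitian d×d complex matrices and let H = Σ_{j=1}^s (E_{0j} + E_{j0}) ⊗ B_j. Then the operator (spectral) norm of H satisfies ‖H‖² = ‖Σ_{j=1}^s B_j²‖ ≤ Σ_{j=1}^s ‖B_j‖². -/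
/-!
Put `N = ∑ⱼ E_{j0} ⊗ Bⱼ`. Since the `Bⱼ` are Hermitian, `H = N* + N`, and `N² = 0`. Hence
`H² = N*N + NN*` is a sum of two self-adjoint elements with product zero and the same norm
`‖N‖²`, so in the C⋆-algebra of matrices `‖H‖² = ‖H²‖ = ‖N‖² = ‖N*N‖`. Finally
`N*N = E₀₀ ⊗ ∑ⱼ Bⱼ²`, and `E₀₀ ⊗ X` is the conjugate of `X` by an isometry, so it has the norm
of `X`. The inequality is the triangle inequality together with `‖Bⱼ²‖ = ‖Bⱼ‖²`.
-/

open Matrix Kronecker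

/-- The operator (spectral) norm of a complex square matrix, i.e. the norm of the
continuous linear map it induces on Euclidean space (its largest singular value). -/
noncomputable def matOpNorm {m : Type*} [Fintype m] [DecidableEq m]
    (A : Matrix m m ℂ) : ℝ :=
  ‖Matrix.toEuclideanCLM (𝕜 := ℂ) A‖

open scoped Matrix.Norms.L2Operator

theorem norm_star_add_self_of_mul_self_eq_zero {A : Type*} [NonUnitalCStarAlgebra A] {a : A}
    (ha : a * a = 0) : ‖star a + a‖ = ‖a‖ := by
  have hsq : (star a + a) * (star a + a) = star a * a + a * star a := by
    rw [add_mul, mul_add, mul_add, ← star_mul, ha, star_zero, zero_add, add_zero]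
  have horth : star a * a * (a * star a) = 0 := by
    rw [mul_assoc, ← mul_assoc a, ha, zero_mul, mul_zero]
  refine (pow_left_inj₀ (norm_nonneg _) (norm_nonneg a) two_ne_zero).1 ?_
  calc ‖star a + a‖ ^ 2 = ‖star a * a + a * star a‖ := by
        rw [← hsq, sq, ← CStarRing.norm_star_mul_self, (IsSelfAdjoint.star_add_self a).star_eq]
    _ = ‖a‖ ^ 2 := by
        rw [(IsSelfAdjoint.star_mul_self a).norm_add_eq_max (.mul_star_self a) horth,
          CStarRing.norm_star_mul_self, CStarRing.norm_self_mul_star, max_self, sq]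

namespace Matrix

theorem kronecker_sum {R ι l m n p : Type*} [CommSemiring R] (A : Matrix l m R) (t : Finset ι)
    (f : ι → Matrix n p R) : A ⊗ₖ ∑ i ∈ t, f i = ∑ i ∈ t, A ⊗ₖ f i :=
  map_sum (kroneckerBilinear (R := R) A) f t

section L2OpNorm

variable {𝕜 : Type*} [RCLike 𝕜] {m n : Type*} [Fintype m] [Fintype n] [DecidableEq n]

theorem l2_opNorm_one_le : ‖(1 : Matrix n n 𝕜)‖ ≤ 1 := by
  rw [← diagonal_one, l2_opNorm_diagonal]
  exact pi_norm_const_le 1 |>.trans norm_one.le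

theorem l2_opNorm_le_one_of_conjTranspose_mul_self_eq_one {V : Matrix m n 𝕜}
    (hV : Vᴴ * V = 1) : ‖V‖ ≤ 1 := by
  have h := l2_opNorm_conjTranspose_mul_self V
  rw [hV] at h
  nlinarith [l2_opNorm_one_le (n := n) (𝕜 := 𝕜), norm_nonneg V]

theorem l2_opNorm_mul_mul_conjTranspose_of_isometry [DecidableEq m] {V : Matrix m n 𝕜}
    (hV : Vᴴ * V = 1) (A : Matrix n n 𝕜) : ‖V * A * Vᴴ‖ = ‖A‖ := by
  have hV1 := l2_opNorm_le_one_of_conjTranspose_mul_self_eq_one hV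
  have hVH1 : ‖Vᴴ‖ ≤ 1 := (l2_opNorm_conjTranspose V).trans_le hV1
  refine le_antisymm ?_ ?_
  · calc ‖V * A * Vᴴ‖ ≤ ‖V‖ * ‖A‖ * ‖Vᴴ‖ :=
          (l2_opNorm_mul _ _).trans (by gcongr; exact l2_opNorm_mul _ _)
      _ ≤ 1 * ‖A‖ * 1 := by gcongr
      _ = ‖A‖ := by ring
  · calc ‖A‖ = ‖Vᴴ * (V * A * Vᴴ) * V‖ := by
          rw [← Matrix.mul_assoc, ← Matrix.mul_assoc, hV, Matrix.one_mul, Matrix.mul_assoc, hV,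
            Matrix.mul_one]
      _ ≤ ‖Vᴴ‖ * ‖V * A * Vᴴ‖ * ‖V‖ :=
          (l2_opNorm_mul _ _).trans (by gcongr; exact l2_opNorm_mul _ _)
      _ ≤ 1 * ‖V * A * Vᴴ‖ * 1 := by gcongr
      _ = ‖V * A * Vᴴ‖ := by ring

theorem l2_opNorm_single_kronecker {ι : Type*} [Fintype ι] [DecidableEq ι] (i : ι)
    (A : Matrix n n 𝕜) : ‖single i i (1 : 𝕜) ⊗ₖ A‖ = ‖A‖ := by
  let V : Matrix (ι × n) n 𝕜 := of fun p j => if p = (i, j) then 1 else 0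
  have hV : Vᴴ * V = 1 := by
    ext j k
    simp [V, mul_apply, one_apply, eq_comm]
  have hVAV : V * A * Vᴴ = single i i 1 ⊗ₖ A := by
    ext ⟨a, j⟩ ⟨b, k⟩
    by_cases hb : i = b <;> simp [V, mul_apply, single, ite_and, eq_comm, hb]
  rw [← hVAV, l2_opNorm_mul_mul_conjTranspose_of_isometry hV]

end L2OpNorm

section FirstBlockColumn

variable {R : Type*} [CommRing R] {n : Type*} {s : ℕ}

def firstBlockColumn (B : Fin s → Matrix n n R) : Matrix (Fin (s + 1) × n) (Fin (s + 1) × n) R :=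
  ∑ j, single j.succ 0 1 ⊗ₖ B j

theorem conjTranspose_firstBlockColumn [StarRing R] (B : Fin s → Matrix n n R) :
    (firstBlockColumn B)ᴴ = ∑ j, single 0 j.succ 1 ⊗ₖ (B j)ᴴ := by
  simp [firstBlockColumn, conjTranspose_sum, conjTranspose_kronecker, conjTranspose_single]

theorem conjTranspose_firstBlockColumn_add_self [StarRing R] {B : Fin s → Matrix n n R}
    (hB : ∀ j, (B j).IsHermitian) :
    (firstBlockColumn B)ᴴ + firstBlockColumn B
      = ∑ j, (single 0 j.succ 1 + single j.succ 0 1) ⊗ₖ B j := by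
  simp_rw [conjTranspose_firstBlockColumn, fun j => (hB j).eq, firstBlockColumn,
    ← Finset.sum_add_distrib, add_kronecker]

variable [Fintype n]

theorem firstBlockColumn_mul_self (B : Fin s → Matrix n n R) :
    firstBlockColumn B * firstBlockColumn B = 0 := by
  simp [firstBlockColumn, Finset.sum_mul_sum, ← mul_kronecker_mul,
    single_mul_single_of_ne _ _ _ _ (Fin.succ_ne_zero _).symm]

theorem conjTranspose_firstBlockColumn_mul_self [StarRing R] (B : Fin s → Matrix n n R) :
    (firstBlockColumn B)ᴴ * firstBlockColumn B = single 0 0 1 ⊗ₖ ∑ j, (B j)ᴴ * B j := by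
  rw [conjTranspose_firstBlockColumn, firstBlockColumn, Finset.sum_mul_sum, kronecker_sum]
  refine Finset.sum_congr rfl fun j _ => ?_
  rw [Finset.sum_eq_single j]
  · simp [← mul_kronecker_mul]
  · intro k _ hk
    rw [← mul_kronecker_mul, single_mul_single_of_ne _ _ _ _ (Fin.succ_injective _ |>.ne hk.symm),
      zero_kronecker]
  · simp

theorem l2_opNorm_firstBlockColumn_sq {𝕜 : Type*} [RCLike 𝕜] [DecidableEq n]
    (B : Fin s → Matrix n n 𝕜) :
    ‖firstBlockColumn B‖ ^ 2 = ‖∑ j, (B j)ᴴ * B j‖ := by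
  rw [sq, ← l2_opNorm_conjTranspose_mul_self, conjTranspose_firstBlockColumn_mul_self,
    l2_opNorm_single_kronecker]

end FirstBlockColumn

end Matrix

/-- Let `B_1,…,B_s` be Hermitian `d×d` matrices and `H = ∑_j (E_{0j} + E_{j0}) ⊗ B_j`.
Then `‖H‖² = ‖∑_j B_j²‖ ≤ ∑_j ‖B_j‖²` (operator norms). -/
theorem stmt_13 (s d : ℕ) (B : Fin s → Matrix (Fin d) (Fin d) ℂ)
    (hB : ∀ j, (B j).IsHermitian) :
    matOpNorm (∑ j : Fin s,
          (Matrix.single (0 : Fin (s + 1)) j.succ (1 : ℂ)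
            + Matrix.single j.succ 0 1) ⊗ₖ B j) ^ 2
      = matOpNorm (∑ j : Fin s, B j ^ 2)
    ∧ matOpNorm (∑ j : Fin s, B j ^ 2) ≤ ∑ j : Fin s, matOpNorm (B j) ^ 2 := by
  simp only [matOpNorm, ← cstar_norm_def]
  have hsum : ∑ j, (B j)ᴴ * B j = ∑ j, B j ^ 2 := by simp_rw [fun j => (hB j).eq, sq]
  constructor
  · rw [← conjTranspose_firstBlockColumn_add_self hB, ← star_eq_conjTranspose,
      norm_star_add_self_of_mul_self_eq_zero (firstBlockColumn_mul_self B),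
      l2_opNorm_firstBlockColumn_sq, hsum]
  · calc ‖∑ j, B j ^ 2‖ ≤ ∑ j, ‖B j ^ 2‖ := norm_sum_le _ _
      _ = ∑ j, ‖B j‖ ^ 2 :=
          Finset.sum_congr rfl fun j _ => by simpa using (hB j).isSelfAdjoint.norm_pow_two_pow 1
end

section
/- Let B_1, …, B_s be Hermitian d×d complex matrices and H = Σ_{j=1}^s (E_{0j} + E_{j0}) ⊗ B_j. Then the supremum over unit vectors φ ∈ ℂ^{s+1} and unit vectors ψ ∈ ℂ^d of ⟨φ ⊗ ψ, H(φ ⊗ ψ)⟩ equals the supremum over unit vectors ψ ∈ ℂ^d of √(Σ_{j=1}^s ⟨ψ, B_j ψ⟩²). -/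
/-!
On product vectors the form factorises: `⟨φ ⊗ ψ, H (φ ⊗ ψ)⟩ = ∑ⱼ 2 Re(φ̄₀ φⱼ) xⱼ` with
`xⱼ = Re ⟨ψ, Bⱼ ψ⟩`. For fixed `ψ`, Cauchy–Schwarz and `2ab ≤ a² + b²` bound this by `‖x‖` over
unit `φ`, with equality at `φ = (1, x / ‖x‖) / √2`; hence each set of values is dominated by
the other.
-/

open Matrix Kronecker

namespace Matrix

variable {R k l m n : Type*} [Fintype m] [Fintype n]

theorem kronecker_mulVec_outer [CommSemiring R] (A : Matrix l m R) (M : Matrix k n R)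
    (φ : m → R) (ψ : n → R) :
    (A ⊗ₖ M) *ᵥ (fun p : m × n => φ p.1 * ψ p.2) = fun p => (A *ᵥ φ) p.1 * (M *ᵥ ψ) p.2 := by
  ext p
  simp only [mulVec, dotProduct, kroneckerMap_apply, Fintype.sum_prod_type, Finset.sum_mul_sum]
  exact Finset.sum_congr rfl fun _ _ => Finset.sum_congr rfl fun _ _ => by ring

theorem outer_dotProduct_outer [CommSemiring R] (u x : m → R) (v y : n → R) :
    (fun p : m × n => u p.1 * v p.2) ⬝ᵥ (fun p => x p.1 * y p.2) = (u ⬝ᵥ x) * (v ⬝ᵥ y) := by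
  simp only [dotProduct, Fintype.sum_prod_type, Finset.sum_mul_sum]
  exact Finset.sum_congr rfl fun _ _ => Finset.sum_congr rfl fun _ _ => by ring

theorem star_outer_dotProduct_kronecker_mulVec_outer [CommSemiring R] [StarRing R]
    (A : Matrix m m R) (M : Matrix n n R) (φ : m → R) (ψ : n → R) :
    star (fun p : m × n => φ p.1 * ψ p.2) ⬝ᵥ ((A ⊗ₖ M) *ᵥ fun p => φ p.1 * ψ p.2)
      = (star φ ⬝ᵥ (A *ᵥ φ)) * (star ψ ⬝ᵥ (M *ᵥ ψ)) := by
  have : star (fun p : m × n => φ p.1 * ψ p.2) = fun p => star φ p.1 * star ψ p.2 := by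
    ext p; exact star_mul' _ _
  rw [this, kronecker_mulVec_outer, outer_dotProduct_outer]

theorem star_dotProduct_single_add_single_mulVec [DecidableEq m] (a b : m) (φ : m → ℂ) :
    star φ ⬝ᵥ ((single a b 1 + single b a 1) *ᵥ φ) = 2 * (starRingEnd ℂ (φ a) * φ b).re := by
  rw [add_mulVec, dotProduct_add, single_mulVec, single_mulVec]
  simp only [dotProduct, Function.update_apply, mul_ite, mul_zero, Finset.sum_ite_eq',
    Finset.mem_univ, if_true, one_mul, Pi.star_apply, RCLike.star_def, Pi.zero_apply]
  rw [Complex.re_eq_add_conj]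
  simp only [map_mul, Complex.conj_conj]
  ring

theorem re_star_outer_dotProduct_mulVec_outer {s d : ℕ} (B : Fin s → Matrix (Fin d) (Fin d) ℂ)
    (φ : Fin (s + 1) → ℂ) (ψ : Fin d → ℂ) :
    (star (fun p : Fin (s + 1) × Fin d => φ p.1 * ψ p.2) ⬝ᵥ
      ((∑ j : Fin s, (single (0 : Fin (s + 1)) j.succ (1 : ℂ) + single j.succ 0 1) ⊗ₖ B j)
        *ᵥ fun p => φ p.1 * ψ p.2)).re
      = ∑ j, 2 * (starRingEnd ℂ (φ 0) * φ j.succ).re * (star ψ ⬝ᵥ (B j *ᵥ ψ)).re := by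
  rw [sum_mulVec, dotProduct_sum, Complex.re_sum]
  refine Finset.sum_congr rfl fun j _ => ?_
  rw [star_outer_dotProduct_kronecker_mulVec_outer, star_dotProduct_single_add_single_mulVec]
  rw [← Complex.ofReal_ofNat, ← Complex.ofReal_mul, Complex.re_ofReal_mul]

end Matrix

section Mixing

variable {s : ℕ}

theorem sum_two_re_conj_mul_le_sqrt (x : Fin s → ℝ) {φ : Fin (s + 1) → ℂ}
    (hφ : ∑ a, ‖φ a‖ ^ 2 = 1) :
    ∑ j, 2 * (starRingEnd ℂ (φ 0) * φ j.succ).re * x j ≤ √(∑ j, x j ^ 2) := by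
  set a := ‖φ 0‖
  set b : Fin s → ℝ := fun j => ‖φ j.succ‖
  have hab : a ^ 2 + ∑ j, b j ^ 2 = 1 := by rw [← hφ, Fin.sum_univ_succ]
  have hterm : ∀ j, 2 * (starRingEnd ℂ (φ 0) * φ j.succ).re * x j ≤ 2 * a * (b j * |x j|) := by
    intro j
    set w := starRingEnd ℂ (φ 0) * φ j.succ
    calc 2 * w.re * x j ≤ 2 * (|w.re| * |x j|) := by
          rw [mul_assoc, ← abs_mul]; gcongr; exact le_abs_self _
      _ ≤ 2 * (‖w‖ * |x j|) := by gcongr; exact Complex.abs_re_le_norm w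
      _ = 2 * a * (b j * |x j|) := by rw [norm_mul, Complex.norm_conj]; ring
  have hcs : ∑ j, b j * |x j| ≤ √(∑ j, b j ^ 2) * √(∑ j, x j ^ 2) := by
    simpa only [sq_abs] using Real.sum_mul_le_sqrt_mul_sqrt Finset.univ b (fun j => |x j|)
  have hamgm : 2 * a * √(∑ j, b j ^ 2) ≤ 1 := by
    have := Real.sq_sqrt (Finset.sum_nonneg fun j (_ : j ∈ Finset.univ) => sq_nonneg (b j))
    nlinarith [sq_nonneg (a - √(∑ j, b j ^ 2))]
  calc ∑ j, 2 * (starRingEnd ℂ (φ 0) * φ j.succ).re * x j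
      ≤ 2 * a * ∑ j, b j * |x j| := by
        rw [Finset.mul_sum]; exact Finset.sum_le_sum fun j _ => hterm j
    _ ≤ 2 * a * (√(∑ j, b j ^ 2) * √(∑ j, x j ^ 2)) := by gcongr
    _ ≤ √(∑ j, x j ^ 2) := by
        rw [← mul_assoc]; exact mul_le_of_le_one_left (Real.sqrt_nonneg _) hamgm

theorem exists_sum_two_re_conj_mul_eq_sqrt (x : Fin s → ℝ) :
    ∃ φ : Fin (s + 1) → ℂ, ∑ a, ‖φ a‖ ^ 2 = 1 ∧
      ∑ j, 2 * (starRingEnd ℂ (φ 0) * φ j.succ).re * x j = √(∑ j, x j ^ 2) := by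
  set N := √(∑ j, x j ^ 2)
  rcases eq_or_ne N 0 with hN | hN
  · refine ⟨Pi.single 0 1, ?_, ?_⟩
    · simp [Fin.sum_univ_succ]
    · simp [hN, Fin.succ_ne_zero]
  have hN2 : N ^ 2 = ∑ j, x j ^ 2 := Real.sq_sqrt (Finset.sum_nonneg fun j _ => sq_nonneg _)
  have h2 : √2 ^ 2 = 2 := Real.sq_sqrt zero_le_two
  refine ⟨Fin.cons ((√2)⁻¹ : ℝ) fun j => (x j / (√2 * N) : ℝ), ?_, ?_⟩
  · simp only [Fin.sum_univ_succ, Fin.cons_zero, Fin.cons_succ, Complex.norm_real,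
      Real.norm_eq_abs, sq_abs, div_pow, mul_pow, inv_pow, h2, ← Finset.sum_div, ← hN2]
    field_simp
    norm_num
  · simp only [Fin.cons_zero, Fin.cons_succ, Complex.conj_ofReal, ← Complex.ofReal_mul,
      Complex.ofReal_re]
    calc ∑ j, 2 * ((√2)⁻¹ * (x j / (√2 * N))) * x j = (∑ j, x j ^ 2) / N := by
          rw [Finset.sum_div]
          refine Finset.sum_congr rfl fun j _ => ?_
          field_simp
          rw [h2]
      _ = N := by rw [← hN2]; field_simp

end Mixing

theorem stmt_16_general (s d : ℕ) (B : Fin s → Matrix (Fin d) (Fin d) ℂ) :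
    sSup {r : ℝ | ∃ (φ : Fin (s + 1) → ℂ) (ψ : Fin d → ℂ),
        (∑ a, ‖φ a‖ ^ 2) = 1 ∧ (∑ i, ‖ψ i‖ ^ 2) = 1 ∧
        r = (star (fun p : Fin (s + 1) × Fin d => φ p.1 * ψ p.2) ⬝ᵥ
          ((∑ j : Fin s,
              (Matrix.single (0 : Fin (s + 1)) j.succ (1 : ℂ)
                + Matrix.single j.succ 0 1) ⊗ₖ B j)
            *ᵥ fun p : Fin (s + 1) × Fin d => φ p.1 * ψ p.2)).re}
      = sSup {r : ℝ | ∃ ψ : Fin d → ℂ, (∑ i, ‖ψ i‖ ^ 2) = 1 ∧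
          r = Real.sqrt (∑ j : Fin s, ((star ψ ⬝ᵥ (B j *ᵥ ψ)).re) ^ 2)} := by
  apply csSup_eq_csSup_of_forall_exists_le
  · rintro _ ⟨φ, ψ, hφ, hψ, rfl⟩
    refine ⟨_, ⟨ψ, hψ, rfl⟩, ?_⟩
    rw [re_star_outer_dotProduct_mulVec_outer]
    exact sum_two_re_conj_mul_le_sqrt _ hφ
  · rintro _ ⟨ψ, hψ, rfl⟩
    obtain ⟨φ, hφ, hval⟩ := exists_sum_two_re_conj_mul_eq_sqrt fun j => (star ψ ⬝ᵥ (B j *ᵥ ψ)).re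
    refine ⟨_, ⟨φ, ψ, hφ, hψ, rfl⟩, ?_⟩
    rw [re_star_outer_dotProduct_mulVec_outer, hval]

/-- With `H = ∑_j (E_{0j} + E_{j0}) ⊗ B_j` for Hermitian `B_j`, the supremum over unit
vectors `φ ∈ ℂ^{s+1}`, `ψ ∈ ℂ^d` of `⟨φ ⊗ ψ, H (φ ⊗ ψ)⟩` equals the supremum over unit
vectors `ψ ∈ ℂ^d` of `√(∑_j ⟨ψ, B_j ψ⟩²)`. -/
theorem stmt_16 (s d : ℕ) (B : Fin s → Matrix (Fin d) (Fin d) ℂ)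
    (hB : ∀ j, (B j).IsHermitian) :
    sSup {r : ℝ | ∃ (φ : Fin (s + 1) → ℂ) (ψ : Fin d → ℂ),
        (∑ a, ‖φ a‖ ^ 2) = 1 ∧ (∑ i, ‖ψ i‖ ^ 2) = 1 ∧
        r = (star (fun p : Fin (s + 1) × Fin d => φ p.1 * ψ p.2) ⬝ᵥ
          ((∑ j : Fin s,
              (Matrix.single (0 : Fin (s + 1)) j.succ (1 : ℂ)
                + Matrix.single j.succ 0 1) ⊗ₖ B j)
            *ᵥ fun p : Fin (s + 1) × Fin d => φ p.1 * ψ p.2)).re}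
      = sSup {r : ℝ | ∃ ψ : Fin d → ℂ, (∑ i, ‖ψ i‖ ^ 2) = 1 ∧
          r = Real.sqrt (∑ j : Fin s, ((star ψ ⬝ᵥ (B j *ᵥ ψ)).re) ^ 2)} :=
  stmt_16_general s d B
end

section
/- For n ≥ 2, let H be the Hermitian matrix H = Σ_{1≤j<l≤n} (E_{0,(j,l)} + E_{(j,l),0}) ⊗ B_{jl} built from the n(n−1)/2 matrices B_{jl} (so H acts on ℂ^{(s+1)n} with s = n(n−1)/2). Then the matrix (1/2)·I + (1/(3n))·H is positive semidefinite and its operator norm is strictly less than 1. -/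
open Matrix Kronecker ComplexOrder

/-!
Write `H = M + Mᴴ`, where `M = ∑ₚ E_{0,p} ⊗ B_p` is the first block row of `H`. The summands
`Vₚ = E_{0,p} ⊗ B_p` satisfy `Vₚ V_qᴴ = 0` for `p ≠ q`, and `Vₚ Vₚᴴ = E_{00} ⊗ (E_{jj} + E_{ll})`
is an orthogonal projection, so by the C⋆-identity `‖M‖² = ‖M Mᴴ‖ = ‖∑ₚ Vₚ Vₚᴴ‖ ≤ s ≤ n² / 2`. Hence
`‖H / (3n)‖ ≤ 2‖M‖ / (3n) ≤ √2 / 3 < 1 / 2`, and a Hermitian perturbation of `I / 2` of norm below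
`1 / 2` is positive semidefinite and of norm below `1`.
-/

open scoped Matrix.Norms.L2Operator MatrixOrder

theorem IsStarProjection.add_of_mul_eq_zero {R : Type*} [NonUnitalSemiring R] [StarRing R]
    {p q : R} (hp : IsStarProjection p) (hq : IsStarProjection q) (hpq : p * q = 0) :
    IsStarProjection (p + q) := by
  have hqp : q * p = 0 := by
    simpa [hp.isSelfAdjoint.star_eq, hq.isSelfAdjoint.star_eq] using congrArg star hpq
  refine ⟨?_, hp.isSelfAdjoint.add hq.isSelfAdjoint⟩
  simp only [IsIdempotentElem, add_mul, mul_add, hp.isIdempotentElem.eq, hq.isIdempotentElem.eq,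
    hpq, hqp, add_zero, zero_add]

theorem CStarRing.norm_le_one_of_isStarProjection_mul_star {E : Type*} [NonUnitalNormedRing E]
    [StarRing E] [CStarRing E] {v : E} (hv : IsStarProjection (v * star v)) : ‖v‖ ≤ 1 := by
  have := hv.norm_le
  rw [CStarRing.norm_self_mul_star] at this
  nlinarith [norm_nonneg v]

theorem CStarRing.norm_sum_sq_le_of_mul_star_eq_zero {E ι : Type*} [NonUnitalNormedRing E]
    [StarRing E] [CStarRing E] (s : Finset ι) (V : ι → E)
    (hV : ∀ i ∈ s, ∀ j ∈ s, i ≠ j → V i * star (V j) = 0) :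
    ‖∑ i ∈ s, V i‖ ^ 2 ≤ ∑ i ∈ s, ‖V i‖ ^ 2 := by
  have hdiag : (∑ i ∈ s, V i) * star (∑ i ∈ s, V i) = ∑ i ∈ s, V i * star (V i) := by
    rw [star_sum, Finset.sum_mul_sum]
    exact Finset.sum_congr rfl fun i hi =>
      Finset.sum_eq_single_of_mem i hi fun j hj hji => hV i hi j hj hji.symm
  calc ‖∑ i ∈ s, V i‖ ^ 2 = ‖∑ i ∈ s, V i * star (V i)‖ := by
        rw [sq, ← CStarRing.norm_self_mul_star, hdiag]
    _ ≤ ∑ i ∈ s, ‖V i * star (V i)‖ := norm_sum_le _ _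
    _ = ∑ i ∈ s, ‖V i‖ ^ 2 := by simp only [CStarRing.norm_self_mul_star, sq]

theorem IsStarProjection.kronecker {l m R : Type*} [Fintype l] [Fintype m] [CommSemiring R]
    [StarRing R] {P : Matrix l l R} {Q : Matrix m m R} (hP : IsStarProjection P)
    (hQ : IsStarProjection Q) : IsStarProjection (P ⊗ₖ Q) where
  isIdempotentElem := by
    rw [IsIdempotentElem, ← mul_kronecker_mul, hP.isIdempotentElem.eq, hQ.isIdempotentElem.eq]
  isSelfAdjoint := by
    rw [IsSelfAdjoint, Matrix.star_eq_conjTranspose, conjTranspose_kronecker,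
      ← Matrix.star_eq_conjTranspose, ← Matrix.star_eq_conjTranspose, hP.isSelfAdjoint.star_eq,
      hQ.isSelfAdjoint.star_eq]

namespace Matrix

theorem isStarProjection_single_self {k R : Type*} [DecidableEq k] [Fintype k] [Semiring R]
    [StarRing R] (i : k) : IsStarProjection (single i i (1 : R)) :=
  ⟨by simp [IsIdempotentElem, single_mul_single_same],
    by simp [IsSelfAdjoint, star_eq_conjTranspose]⟩

theorem posSemidef_smul_one_add_of_norm_le {m : Type*} [Fintype m] [DecidableEq m]
    {A : Matrix m m ℂ} (hA : IsSelfAdjoint A) {r : ℝ} (h : ‖A‖ ≤ r) :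
    ((r : ℂ) • 1 + A).PosSemidef := by
  have hr : -algebraMap ℝ (Matrix m m ℂ) r ≤ A := by
    refine le_trans (neg_le_neg ?_) hA.neg_algebraMap_norm_le_self
    rw [Algebra.algebraMap_eq_smul_one, Algebra.algebraMap_eq_smul_one, ← sub_nonneg, ← sub_smul]
    exact smul_nonneg (sub_nonneg.mpr h) zero_le_one
  rwa [← nonneg_iff_posSemidef, ← neg_le_iff_add_nonneg', Complex.coe_smul,
    ← Algebra.algebraMap_eq_smul_one]

theorem l2_opNorm_one_le_s18 {m : Type*} [Fintype m] [DecidableEq m] :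
    ‖(1 : Matrix m m ℂ)‖ ≤ 1 := by
  rw [cstar_norm_def, map_one]
  exact ContinuousLinearMap.norm_id_le

theorem posSemidef_and_matOpNorm_lt_one_of_norm_lt_half {m : Type*} [Fintype m]
    [DecidableEq m] {A : Matrix m m ℂ} (hA : IsSelfAdjoint A) (h : ‖A‖ < 1 / 2) :
    ((1 / 2 : ℂ) • 1 + A).PosSemidef ∧ matOpNorm ((1 / 2 : ℂ) • 1 + A) < 1 := by
  have hpsd := posSemidef_smul_one_add_of_norm_le hA (r := 1 / 2) h.le
  push_cast at hpsd
  refine ⟨hpsd, ?_⟩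
  change ‖(1 / 2 : ℂ) • (1 : Matrix m m ℂ) + A‖ < 1
  calc ‖(1 / 2 : ℂ) • (1 : Matrix m m ℂ) + A‖ ≤ ‖(1 / 2 : ℂ)‖ * ‖(1 : Matrix m m ℂ)‖ + ‖A‖ :=
        (norm_add_le _ _).trans (add_le_add_left (norm_smul_le _ _) _)
    _ < 1 := by
        have := l2_opNorm_one_le_s18 (m := m)
        norm_num
        linarith

end Matrix

section Arrowhead

variable {𝕜 ι k : Type*} [RCLike 𝕜] [Fintype ι] [DecidableEq ι]

def arrowRow (B : ι → Matrix k k 𝕜) : Matrix (Option ι × k) (Option ι × k) 𝕜 :=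
  ∑ i, single none (some i) 1 ⊗ₖ B i

theorem arrowRow_add_conjTranspose {B : ι → Matrix k k 𝕜} (hB : ∀ i, (B i).IsHermitian) :
    arrowRow B + (arrowRow B)ᴴ =
      ∑ i, (single none (some i) 1 + single (some i) none 1) ⊗ₖ B i := by
  simp only [arrowRow, conjTranspose_sum, conjTranspose_kronecker, conjTranspose_single, star_one,
    fun i => (hB i).eq, ← Finset.sum_add_distrib, add_kronecker]

theorem norm_arrowRow_sq_le [Fintype k] [DecidableEq k] {B : ι → Matrix k k 𝕜}
    (hB : ∀ i, IsStarProjection (B i * (B i)ᴴ)) :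
    ‖arrowRow B‖ ^ 2 ≤ Fintype.card ι := by
  set V : ι → Matrix (Option ι × k) (Option ι × k) 𝕜 := fun i => single none (some i) 1 ⊗ₖ B i
  have hV : ∀ i j, V i * star (V j) =
      (single none (some i) 1 * single (some j) none 1) ⊗ₖ (B i * (B j)ᴴ) := fun i j => by
    rw [star_eq_conjTranspose, conjTranspose_kronecker, conjTranspose_single, star_one,
      mul_kronecker_mul]
  calc ‖arrowRow B‖ ^ 2 ≤ ∑ i, ‖V i‖ ^ 2 :=
        CStarRing.norm_sum_sq_le_of_mul_star_eq_zero _ V fun i _ j _ hij => by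
          rw [hV, single_mul_single_of_ne (h := Option.some_injective _ |>.ne hij),
            zero_kronecker]
    _ ≤ ∑ _i : ι, (1 : ℝ) := by
        gcongr with i
        refine pow_le_one₀ (norm_nonneg _) (CStarRing.norm_le_one_of_isStarProjection_mul_star ?_)
        rw [hV, single_mul_single_same, one_mul]
        exact (isStarProjection_single_self _).kronecker (hB i)
    _ = Fintype.card ι := by simp

end Arrowhead

section PairMatrix

variable {R k : Type*} [Semiring R] [StarRing R] [DecidableEq k]

def pairMatrix (j l : k) : Matrix k k R := single j l 1 + single l j 1

theorem pairMatrix_isHermitian (j l : k) : (pairMatrix j l : Matrix k k R).IsHermitian := by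
  simp [IsHermitian, pairMatrix, add_comm]

theorem isStarProjection_pairMatrix_mul_conjTranspose [Fintype k] {j l : k} (h : j ≠ l) :
    IsStarProjection ((pairMatrix j l : Matrix k k R) * (pairMatrix j l)ᴴ) := by
  have hsq : (pairMatrix j l : Matrix k k R) * (pairMatrix j l)ᴴ = single j j 1 + single l l 1 := by
    rw [(pairMatrix_isHermitian j l).eq]
    simp [pairMatrix, add_mul, mul_add, h, h.symm, add_comm]
  rw [hsq]
  exact (isStarProjection_single_self j).add_of_mul_eq_zero (isStarProjection_single_self l)
    (single_mul_single_of_ne (h := h) ..)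

end PairMatrix

theorem two_mul_card_fst_lt_snd_le_sq (α : Type*) [Fintype α] [LinearOrder α] :
    2 * Fintype.card {p : α × α // p.1 < p.2} ≤ Fintype.card α ^ 2 := by
  rw [Fintype.card_subtype, Fintype.card_product_filter_lt, Nat.choose_two_right, sq]
  exact (Nat.mul_div_le _ _).trans (Nat.mul_le_mul_left _ (Nat.sub_le _ _))

noncomputable abbrev pairArrowRow (n : ℕ) :
    Matrix (Option {p : Fin n × Fin n // p.1 < p.2} × Fin n)
      (Option {p : Fin n × Fin n // p.1 < p.2} × Fin n) ℂ :=
  arrowRow fun p : {p : Fin n × Fin n // p.1 < p.2} => pairMatrix p.1.1 p.1.2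

theorem two_mul_norm_pairArrowRow_sq_le (n : ℕ) : 2 * ‖pairArrowRow n‖ ^ 2 ≤ n ^ 2 := by
  have hcard := two_mul_card_fst_lt_snd_le_sq (Fin n)
  rw [Fintype.card_fin] at hcard
  have hM := norm_arrowRow_sq_le fun p : {p : Fin n × Fin n // p.1 < p.2} =>
    isStarProjection_pairMatrix_mul_conjTranspose (R := ℂ) p.2.ne
  have : (2 * Fintype.card {p : Fin n × Fin n // p.1 < p.2} : ℝ) ≤ n ^ 2 := by exact_mod_cast hcard
  linarith

theorem norm_smul_pairArrowRow_add_conjTranspose_lt (n : ℕ) :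
    ‖(1 / (3 * n) : ℂ) • (pairArrowRow n + (pairArrowRow n)ᴴ)‖ < 1 / 2 := by
  have hH : ‖pairArrowRow n + (pairArrowRow n)ᴴ‖ ≤ 2 * ‖pairArrowRow n‖ := by
    refine (norm_add_le _ _).trans_eq ?_
    rw [l2_opNorm_conjTranspose, two_mul]
  have hM := two_mul_norm_pairArrowRow_sq_le n
  rw [norm_smul]
  rcases n.eq_zero_or_pos with rfl | hn
  · -- `1 / (3 * 0) = 0` in `ℂ`
    norm_num
  · have hn : (0 : ℝ) < n := by exact_mod_cast hn
    have : ‖(1 / (3 * n) : ℂ)‖ = 1 / (3 * n) := by simp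
    rw [this, div_mul_eq_mul_div, one_mul, div_lt_iff₀ (by positivity)]
    nlinarith [norm_nonneg (pairArrowRow n)]

theorem stmt_18_general (n : ℕ) :
    ((1 / 2 : ℂ) • (1 : Matrix (Option {p : Fin n × Fin n // p.1 < p.2} × Fin n)
          (Option {p : Fin n × Fin n // p.1 < p.2} × Fin n) ℂ)
        + (1 / (3 * n) : ℂ) •
          ∑ p : {p : Fin n × Fin n // p.1 < p.2},
            (Matrix.single (none : Option {p : Fin n × Fin n // p.1 < p.2})
                (some p) (1 : ℂ)
              + Matrix.single (some p) none 1) ⊗ₖ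
              (Matrix.single p.1.1 p.1.2 (1 : ℂ)
                + Matrix.single p.1.2 p.1.1 1)).PosSemidef
    ∧ matOpNorm
        ((1 / 2 : ℂ) • (1 : Matrix (Option {p : Fin n × Fin n // p.1 < p.2} × Fin n)
            (Option {p : Fin n × Fin n // p.1 < p.2} × Fin n) ℂ)
          + (1 / (3 * n) : ℂ) •
            ∑ p : {p : Fin n × Fin n // p.1 < p.2},
              (Matrix.single (none : Option {p : Fin n × Fin n // p.1 < p.2})
                  (some p) (1 : ℂ)
                + Matrix.single (some p) none 1) ⊗ₖ
                (Matrix.single p.1.1 p.1.2 (1 : ℂ)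
                  + Matrix.single p.1.2 p.1.1 1)) < 1 := by
  have hsa : IsSelfAdjoint ((1 / (3 * n) : ℂ) • (pairArrowRow n + (pairArrowRow n)ᴴ)) :=
    .smul (by simp [IsSelfAdjoint]) (.add_star_self _)
  have hlt := norm_smul_pairArrowRow_add_conjTranspose_lt n
  rw [arrowRow_add_conjTranspose fun p => pairMatrix_isHermitian _ _] at hsa hlt
  exact posSemidef_and_matOpNorm_lt_one_of_norm_lt_half hsa hlt

/-- For `n ≥ 2`, let `H = ∑_{j<l} (E_{0,(j,l)} + E_{(j,l),0}) ⊗ B_{jl}` be the block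
arrowhead matrix built from the `n(n−1)/2` matrices `B_{jl}`. Then `(1/2)·I + (1/(3n))·H`
is positive semidefinite with operator norm strictly less than `1`. -/
theorem stmt_18 (n : ℕ) (hn : 2 ≤ n) :
    ((1 / 2 : ℂ) • (1 : Matrix (Option {p : Fin n × Fin n // p.1 < p.2} × Fin n)
          (Option {p : Fin n × Fin n // p.1 < p.2} × Fin n) ℂ)
        + (1 / (3 * n) : ℂ) •
          ∑ p : {p : Fin n × Fin n // p.1 < p.2},
            (Matrix.single (none : Option {p : Fin n × Fin n // p.1 < p.2})
                (some p) (1 : ℂ)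
              + Matrix.single (some p) none 1) ⊗ₖ
              (Matrix.single p.1.1 p.1.2 (1 : ℂ)
                + Matrix.single p.1.2 p.1.1 1)).PosSemidef
    ∧ matOpNorm
        ((1 / 2 : ℂ) • (1 : Matrix (Option {p : Fin n × Fin n // p.1 < p.2} × Fin n)
            (Option {p : Fin n × Fin n // p.1 < p.2} × Fin n) ℂ)
          + (1 / (3 * n) : ℂ) •
            ∑ p : {p : Fin n × Fin n // p.1 < p.2},
              (Matrix.single (none : Option {p : Fin n × Fin n // p.1 < p.2})
                  (some p) (1 : ℂ)
                + Matrix.single (some p) none 1) ⊗ₖ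
                (Matrix.single p.1.1 p.1.2 (1 : ℂ)
                  + Matrix.single p.1.2 p.1.1 1)) < 1 :=
  stmt_18_general n
end
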